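/- Let H be a complex Hilbert space, M and N closed subspaces of H, and P, Q the orthogonal projections of H onto M and N respectively. Then M + N is a closed subspace of H if and only if ‖PQ − P_{M∩N}‖ < 1, where P_{M∩N} is the orthogonal projection of H onto M ∩ N and ‖·‖ is the operator norm. -/

import Mathlib

/-!
Put `A = M ⊓ N`, `M' = M ⊓ Aᗮ` and `N' = N ⊓ Aᗮ`. Then `PQ - R = P_{M'} P_{N'}`, and `M + N` is
closed iff `(M + N) ⊓ Aᗮ = M' + N'` is closed, so one may assume `M ⊓ N = 0`. In that case, by the
open mapping theorem, `M + N` is closed iff the addition map `M × N → H` is bounded below, i.e. iff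
`c ‖u‖ ≤ ‖u + v‖` for some `c > 0` and all `u ∈ M`, `v ∈ N`. As `⟪u, v⟫ = ⟪u, PQ v⟫` for such
`u, v`, the condition `‖PQ‖ < 1` gives this bound with `c = 1 - ‖PQ‖`. Conversely, `u = PQx` and
`v = -Qx` satisfy `‖Qx‖² = ‖u‖² + ‖u + v‖²`, so the bound forces `‖PQ‖ ≤ (1 + c²)^(-1/2)`.
-/

open Submodule

namespace Submodule

section ClosedSup

variable {𝕜 E : Type*} [NontriviallyNormedField 𝕜] [NormedAddCommGroup E] [NormedSpace 𝕜 E]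
  [CompleteSpace E] {U V : Submodule 𝕜 E} [CompleteSpace U] [CompleteSpace V]

theorem isClosed_sup_iff_exists_mul_norm_le_norm_add (h : Disjoint U V) :
    IsClosed ((U ⊔ V : Submodule 𝕜 E) : Set E) ↔
      ∃ c > 0, ∀ u ∈ U, ∀ v ∈ V, c * ‖u‖ ≤ ‖u + v‖ := by
  set f : U × V →L[𝕜] E := U.subtypeL.coprod V.subtypeL
  have hrange : Set.range f = ((U ⊔ V : Submodule 𝕜 E) : Set E) := by
    change Set.range (U.subtype.coprod V.subtype) = _
    rw [← LinearMap.coe_range, LinearMap.range_coprod, range_subtype, range_subtype]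
  have hinj : Function.Injective f := by
    change Function.Injective (U.subtype.coprod V.subtype)
    rw [← LinearMap.ker_eq_bot, LinearMap.ker_coprod_of_disjoint_range, ker_subtype, ker_subtype,
      prod_bot]
    rwa [range_subtype, range_subtype]
  rw [← hrange, f.isClosed_range_iff_antilipschitz_of_injective hinj,
    antilipschitzWith_iff_exists_mul_le_norm]
  constructor
  · rintro ⟨c, hc, hbound⟩
    refine ⟨c, hc, fun u hu v hv ↦ ?_⟩
    let x : U × V := (⟨u, hu⟩, ⟨v, hv⟩)
    calc c * ‖u‖ ≤ c * ‖x‖ := by gcongr; exact norm_fst_le x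
      _ ≤ ‖u + v‖ := hbound x
  · rintro ⟨c, hc, hbound⟩
    refine ⟨c / (1 + c), by positivity, fun ⟨u, v⟩ ↦ ?_⟩
    have hu := hbound u u.2 v v.2
    have hv := norm_le_add_norm_add' (u : E) v
    change c / (1 + c) * max ‖(u : E)‖ ‖(v : E)‖ ≤ ‖(u : E) + v‖
    rw [div_mul_eq_mul_div, div_le_iff₀ (by positivity), mul_max_of_nonneg _ _ hc.le]
    exact max_le (by nlinarith [norm_nonneg ((u : E) + v)]) (by nlinarith)

end ClosedSup

variable {𝕜 E : Type*} [RCLike 𝕜] [NormedAddCommGroup E] [InnerProductSpace 𝕜 E]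

local notation "⟪" x ", " y "⟫" => inner 𝕜 x y

section ProductOfProjections

variable {U V : Submodule 𝕜 E} [U.HasOrthogonalProjection] [V.HasOrthogonalProjection]

theorem inner_eq_inner_starProjection_mul_starProjection {u v : E} (hu : u ∈ U) (hv : v ∈ V) :
    ⟪u, v⟫ = ⟪u, (U.starProjection * V.starProjection) v⟫ := by
  rw [mul_apply_eq_comp, (starProjection_eq_self_iff (K := V)).mpr hv,
    ← inner_starProjection_left_eq_right, (starProjection_eq_self_iff (K := U)).mpr hu]

theorem norm_starProjection_mul_starProjection_le_one :
    ‖U.starProjection * V.starProjection‖ ≤ 1 :=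
  (norm_mul_le _ _).trans <|
    mul_le_one₀ (starProjection_norm_le U) (norm_nonneg _) (starProjection_norm_le V)

theorem one_sub_norm_starProjection_mul_mul_norm_le_norm_add {u v : E} (hu : u ∈ U)
    (hv : v ∈ V) : (1 - ‖U.starProjection * V.starProjection‖) * ‖u‖ ≤ ‖u + v‖ := by
  set T := U.starProjection * V.starProjection
  have hT : ‖T‖ ≤ 1 := norm_starProjection_mul_starProjection_le_one
  have hinner : ‖⟪u, v⟫‖ ≤ ‖T‖ * (‖u‖ * ‖v‖) :=
    calc ‖⟪u, v⟫‖ ≤ ‖u‖ * ‖T v‖ := by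
          rw [inner_eq_inner_starProjection_mul_starProjection hu hv]
          exact norm_inner_le_norm _ _
      _ ≤ ‖u‖ * (‖T‖ * ‖v‖) := by gcongr; exact T.le_opNorm v
      _ = ‖T‖ * (‖u‖ * ‖v‖) := by ring
  have hre : -(‖T‖ * (‖u‖ * ‖v‖)) ≤ RCLike.re ⟪u, v⟫ :=
    neg_le_of_abs_le ((RCLike.abs_re_le_norm _).trans hinner)
  have hsq : ((1 - ‖T‖) * ‖u‖) ^ 2 ≤ ‖u + v‖ ^ 2 := by
    rw [@norm_add_sq 𝕜]
    nlinarith [mul_nonneg (norm_nonneg T) (sq_nonneg (‖u‖ - ‖v‖)),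
      mul_nonneg (sub_nonneg.2 hT) (sq_nonneg ‖v‖),
      mul_nonneg (mul_nonneg (sub_nonneg.2 hT) (norm_nonneg T)) (sq_nonneg ‖u‖)]
  exact le_of_sq_le_sq hsq (norm_nonneg _)

theorem norm_starProjection_mul_starProjection_lt_one_of_mul_norm_le {c : ℝ} (hc : 0 < c)
    (h : ∀ u ∈ U, ∀ v ∈ V, c * ‖u‖ ≤ ‖u + v‖) : ‖U.starProjection * V.starProjection‖ < 1 := by
  set T := U.starProjection * V.starProjection
  have hsq (x : E) : ‖T x‖ ^ 2 * (1 + c ^ 2) ≤ ‖x‖ ^ 2 := by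
    set y := V.starProjection x
    have hpyth : ‖y‖ ^ 2 = ‖T x‖ ^ 2 + ‖y - T x‖ ^ 2 := by
      rw [norm_sq_eq_add_norm_sq_starProjection y U, starProjection_orthogonal_val]
      rfl
    have hbound : c * ‖T x‖ ≤ ‖y - T x‖ := by
      simpa [norm_sub_rev, ← sub_eq_add_neg] using
        h (T x) (U.starProjection_apply_mem y) (-y) (V.neg_mem (V.starProjection_apply_mem x))
    have hy : ‖y‖ ≤ ‖x‖ := V.norm_starProjection_apply_le x
    nlinarith [mul_self_le_mul_self (by positivity) hbound, mul_self_le_mul_self (norm_nonneg y) hy]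
  have hd : (√(1 + c ^ 2))⁻¹ < 1 :=
    inv_lt_one_of_one_lt₀ ((Real.lt_sqrt zero_le_one).2 (by nlinarith))
  refine lt_of_le_of_lt (T.opNorm_le_bound (by positivity) fun x ↦ ?_) hd
  rw [inv_mul_eq_div, le_div_iff₀ (by positivity)]
  refine le_of_sq_le_sq ?_ (norm_nonneg x)
  rw [mul_pow, Real.sq_sqrt (by positivity)]
  exact hsq x

end ProductOfProjections

theorem isClosed_sup_iff_norm_starProjection_mul_starProjection_lt_one [CompleteSpace E]
    {U V : Submodule 𝕜 E} [CompleteSpace U] [CompleteSpace V] (h : Disjoint U V) :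
    IsClosed ((U ⊔ V : Submodule 𝕜 E) : Set E) ↔ ‖U.starProjection * V.starProjection‖ < 1 := by
  rw [isClosed_sup_iff_exists_mul_norm_le_norm_add h]
  exact ⟨fun ⟨_, hc, hbound⟩ ↦
      norm_starProjection_mul_starProjection_lt_one_of_mul_norm_le hc hbound,
    fun hT ↦ ⟨_, sub_pos.2 hT, fun _ hu _ hv ↦
      one_sub_norm_starProjection_mul_mul_norm_le_norm_add hu hv⟩⟩

theorem eq_starProjection_of_forall_mem_and_sub_mem_orthogonal {K : Submodule 𝕜 E}
    [K.HasOrthogonalProjection] {P : E →L[𝕜] E} (hP : ∀ x, P x ∈ K ∧ x - P x ∈ Kᗮ) :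
    P = K.starProjection :=
  ContinuousLinearMap.ext fun x ↦ (eq_starProjection_of_mem_orthogonal (hP x).1 (hP x).2).symm

section OrthogonalComplementOfSubspace

variable {A W : Submodule 𝕜 E} [A.HasOrthogonalProjection]

theorem map_starProjection_orthogonal_of_le (h : A ≤ W) :
    W.map (Aᗮ.starProjection : E →ₗ[𝕜] E) = W ⊓ Aᗮ := by
  ext x
  constructor
  · rintro ⟨w, hw, rfl⟩
    refine ⟨?_, Aᗮ.starProjection_apply_mem w⟩
    rw [ContinuousLinearMap.coe_coe, starProjection_orthogonal_val]
    exact W.sub_mem hw (h (A.starProjection_apply_mem w))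
  · rintro ⟨hxW, hxA⟩
    exact ⟨x, hxW, starProjection_eq_self_iff.mpr hxA⟩

theorem comap_starProjection_orthogonal_inf_of_le (h : A ≤ W) :
    (W ⊓ Aᗮ).comap (Aᗮ.starProjection : E →ₗ[𝕜] E) = W := by
  ext x
  rw [mem_comap, mem_inf, ContinuousLinearMap.coe_coe, and_iff_left (Aᗮ.starProjection_apply_mem x),
    starProjection_orthogonal_val]
  exact W.sub_mem_iff_left (h (A.starProjection_apply_mem x))

theorem isClosed_iff_isClosed_inf_orthogonal_of_le (h : A ≤ W) :
    IsClosed (W : Set E) ↔ IsClosed ((W ⊓ Aᗮ : Submodule 𝕜 E) : Set E) := by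
  refine ⟨fun hW ↦ hW.inter A.isClosed_orthogonal, fun hW ↦ ?_⟩
  rw [← comap_starProjection_orthogonal_inf_of_le h]
  exact hW.preimage Aᗮ.starProjection.continuous

theorem starProjection_mul_starProjection_of_le {U V : Submodule 𝕜 E}
    [U.HasOrthogonalProjection] [V.HasOrthogonalProjection] (h : U ≤ V) :
    V.starProjection * U.starProjection = U.starProjection := by
  ext x
  exact starProjection_eq_self_iff.mpr (h (U.starProjection_apply_mem x))

theorem starProjection_inf_orthogonal_of_le [W.HasOrthogonalProjection]
    [(W ⊓ Aᗮ).HasOrthogonalProjection] (h : A ≤ W) :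
    (W ⊓ Aᗮ).starProjection = W.starProjection - A.starProjection := by
  ext x
  refine eq_starProjection_of_mem_orthogonal ⟨?_, ?_⟩ ?_
  · exact W.sub_mem (W.starProjection_apply_mem x) (h (A.starProjection_apply_mem x))
  · have hPA : A.starProjection (W.starProjection x) = A.starProjection x :=
      congr($(starProjection_comp_starProjection_of_le h) x)
    rw [sub_apply, ← hPA, ← starProjection_orthogonal_val]
    exact Aᗮ.starProjection_apply_mem _
  · rw [sub_apply, sub_sub_eq_add_sub, add_sub_right_comm]
    exact add_mem (orthogonal_le inf_le_left (W.sub_starProjection_mem_orthogonal x))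
      (orthogonal_le inf_le_right (A.le_orthogonal_orthogonal (A.starProjection_apply_mem x)))

end OrthogonalComplementOfSubspace

section OrthogonalComplementOfIntersection

variable {M N : Submodule 𝕜 E}

theorem disjoint_inf_orthogonal_inf : Disjoint (M ⊓ (M ⊓ N)ᗮ) (N ⊓ (M ⊓ N)ᗮ) := by
  rw [disjoint_iff_inf_le, inf_inf_inf_comm, inf_idem]
  exact (orthogonal_disjoint _).le_bot

variable [(M ⊓ N).HasOrthogonalProjection]

theorem sup_inf_orthogonal_inf : (M ⊔ N) ⊓ (M ⊓ N)ᗮ = M ⊓ (M ⊓ N)ᗮ ⊔ N ⊓ (M ⊓ N)ᗮ := by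
  rw [← map_starProjection_orthogonal_of_le (inf_le_left.trans le_sup_left), map_sup,
    map_starProjection_orthogonal_of_le inf_le_left,
    map_starProjection_orthogonal_of_le inf_le_right]

theorem starProjection_mul_starProjection_sub_starProjection_inf
    [M.HasOrthogonalProjection] [N.HasOrthogonalProjection]
    [(M ⊓ (M ⊓ N)ᗮ).HasOrthogonalProjection] [(N ⊓ (M ⊓ N)ᗮ).HasOrthogonalProjection] :
    M.starProjection * N.starProjection - (M ⊓ N).starProjection =
      (M ⊓ (M ⊓ N)ᗮ).starProjection * (N ⊓ (M ⊓ N)ᗮ).starProjection := by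
  have hRQ : (M ⊓ N).starProjection * N.starProjection = (M ⊓ N).starProjection :=
    starProjection_comp_starProjection_of_le inf_le_right
  rw [starProjection_inf_orthogonal_of_le inf_le_left,
    starProjection_inf_orthogonal_of_le inf_le_right, sub_mul, mul_sub, mul_sub,
    starProjection_mul_starProjection_of_le inf_le_left, hRQ,
    (isIdempotentElem_starProjection (K := M ⊓ N)).eq, sub_self, sub_zero]

end OrthogonalComplementOfIntersection

end Submodule

/-- Friedrichs angle criterion: for closed subspaces `M, N` of a Hilbert space with
orthogonal projections `P, Q`, and `R` the orthogonal projection onto `M ∩ N`,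
`M + N` is closed iff `‖PQ - R‖ < 1`. -/
theorem stmt_9 {H : Type*} [NormedAddCommGroup H] [InnerProductSpace ℂ H] [CompleteSpace H]
    (M N : Submodule ℂ H) (hM : IsClosed (M : Set H)) (hN : IsClosed (N : Set H))
    (P Q R : H →L[ℂ] H)
    (hP : ∀ x : H, P x ∈ M ∧ x - P x ∈ Mᗮ)
    (hQ : ∀ x : H, Q x ∈ N ∧ x - Q x ∈ Nᗮ)
    (hR : ∀ x : H, R x ∈ M ⊓ N ∧ x - R x ∈ (M ⊓ N)ᗮ) :
    IsClosed ((M ⊔ N : Submodule ℂ H) : Set H) ↔ ‖P * Q - R‖ < 1 := by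
  have : CompleteSpace M := hM.completeSpace_coe
  have : CompleteSpace N := hN.completeSpace_coe
  have : CompleteSpace ↥(M ⊓ N) := (hM.inter hN).completeSpace_coe
  have : CompleteSpace ↥(M ⊓ (M ⊓ N)ᗮ) := (hM.inter (M ⊓ N).isClosed_orthogonal).completeSpace_coe
  have : CompleteSpace ↥(N ⊓ (M ⊓ N)ᗮ) := (hN.inter (M ⊓ N).isClosed_orthogonal).completeSpace_coe
  obtain rfl := eq_starProjection_of_forall_mem_and_sub_mem_orthogonal hP
  obtain rfl := eq_starProjection_of_forall_mem_and_sub_mem_orthogonal hQ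
  obtain rfl := eq_starProjection_of_forall_mem_and_sub_mem_orthogonal hR
  rw [isClosed_iff_isClosed_inf_orthogonal_of_le (A := M ⊓ N) (inf_le_left.trans le_sup_left),
    sup_inf_orthogonal_inf, starProjection_mul_starProjection_sub_starProjection_inf]
  exact isClosed_sup_iff_norm_starProjection_mul_starProjection_lt_one disjoint_inf_orthogonal_inf
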